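/- arXiv:2605.27471 — 7 statements merged into one kernel-verified Lean document; each statement's English description precedes it below -/
import Mathlib

section
/- Let a ≤ b be real numbers, let f : ℝ → ℝ be continuous, and suppose f(b) = f(a) + d for a natural number d ≥ 1. Then for every y ∈ ℝ, the set {x ∈ [a,b) : f(x) − y ∈ ℤ} contains at least d points; that is, there is a finite subset of this set of cardinality d. -/
/-- If `f : ℝ → ℝ` is continuous on `ℝ`, `a ≤ b`, and
`f b = f a + d` for a natural number `d ≥ 1`, then for every `y : ℝ` the set
`{x ∈ [a,b) : f x - y ∈ ℤ}` contains at least `d` points, i.e. it has a finite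
subset of cardinality `d`. -/
theorem crossing_count_of_increment (a b : ℝ) (hab : a ≤ b) (f : ℝ → ℝ)
    (hf : Continuous f) (d : ℕ) (hd : 1 ≤ d) (hfb : f b = f a + d) (y : ℝ) :
    ∃ S : Finset ℝ,
      (∀ x ∈ S, x ∈ Set.Ico a b ∧ ∃ k : ℤ, f x - y = k) ∧ S.card = d := by
  set c : ℝ := y + ⌈f a - y⌉ with hc
  have hc1 : f a ≤ c := by
    have := Int.le_ceil (f a - y); linarith
  have hc2 : c < f a + 1 := by
    have := Int.ceil_lt_add_one (f a - y); linarith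
  have key : ∀ i : Fin d, ∃ x, x ∈ Set.Icc a b ∧ f x = c + i := by
    intro i
    have hi : (i : ℝ) + 1 ≤ d := by exact_mod_cast Nat.succ_le_of_lt i.isLt
    have ht : c + (i : ℝ) ∈ Set.Icc (f a) (f b) := by
      constructor
      · have : (0:ℝ) ≤ (i : ℝ) := Nat.cast_nonneg _
        linarith
      · rw [hfb]; linarith
    obtain ⟨x, hx, hfx⟩ := intermediate_value_Icc hab hf.continuousOn ht
    exact ⟨x, hx, hfx⟩
  choose g hg1 hg2 using key
  have hlt : ∀ i : Fin d, f (g i) < f b := by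
    intro i
    have hi : (i : ℝ) + 1 ≤ d := by exact_mod_cast Nat.succ_le_of_lt i.isLt
    rw [hg2 i, hfb]; linarith
  have hinj : Function.Injective g := by
    intro i j hij
    have : c + (i : ℝ) = c + (j : ℝ) := by rw [← hg2 i, ← hg2 j, hij]
    have : (i : ℝ) = (j : ℝ) := by linarith
    have : ((i : ℕ) : ℝ) = ((j : ℕ) : ℝ) := this
    exact Fin.ext (by exact_mod_cast this)
  refine ⟨Finset.image g Finset.univ, ?_, ?_⟩
  · intro x hx
    simp only [Finset.mem_image, Finset.mem_univ, true_and] at hx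
    obtain ⟨i, rfl⟩ := hx
    refine ⟨⟨(hg1 i).1, ?_⟩, ⟨⌈f a - y⌉ + i, ?_⟩⟩
    · rcases lt_or_eq_of_le (hg1 i).2 with h | h
      · exact h
      · exact absurd (hlt i) (by rw [h]; exact lt_irrefl _)
    · rw [hg2 i, hc]; push_cast; ring
  · rw [Finset.card_image_of_injective _ hinj, Finset.card_univ, Fintype.card_fin]
end

section
/- Let f : ℝ → ℝ be continuous with f(x+1) = f(x) + d for all x ∈ ℝ, d an integer, and let y ∈ ℝ. Suppose the fiber F = {x ∈ [0,1) : f(x) − y ∈ ℤ} is finite and that f is differentiable at each point x ∈ F with deriv f x ≠ 0. Then the sum over x ∈ F of the sign of deriv f x (which is +1 or −1 at each such point) equals d. -/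
/-!
Put `g = f - y`. Near a regular fiber point `x`, `g` crosses the integer `g x` transversally,
so `⌊g⌋` jumps by exactly the sign of `g' x` there; between fiber points `g` takes no integer
value and `⌊g⌋` is constant by the intermediate value theorem. Hence on any window `[c, c + 1]`
whose endpoints are not in the fiber, the signed count equals `⌊g (c + 1)⌋ - ⌊g c⌋ = d`. Taking
`c` slightly below `0`, the window meets the fiber exactly in `F`, by periodicity.
-/

open Set Filter Topology

section

variable {g : ℝ → ℝ} {g' x : ℝ}

theorem HasDerivAt.eventually_nhdsGT_lt (hg : HasDerivAt g g' x) (h : 0 < g') :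
    ∀ᶠ t in 𝓝[>] x, g x < g t := by
  filter_upwards [(hasDerivAt_iff_tendsto_slope_left_right.1 hg).2.eventually
    (eventually_gt_nhds h), self_mem_nhdsWithin] with t hslope ht
  exact (slope_pos_iff ht).1 hslope

theorem HasDerivAt.eventually_nhdsLT_gt (hg : HasDerivAt g g' x) (h : 0 < g') :
    ∀ᶠ t in 𝓝[<] x, g t < g x := by
  filter_upwards [(hasDerivAt_iff_tendsto_slope_left_right.1 hg).1.eventually
    (eventually_gt_nhds h), self_mem_nhdsWithin] with t hslope ht
  exact (slope_pos_iff_gt ht).1 hslope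

theorem HasDerivAt.eventually_floor_nhdsGT {k : ℤ} (hg : HasDerivAt g g' x) (hg' : g' ≠ 0)
    (hk : g x = k) : ∀ᶠ t in 𝓝[>] x, ⌊g t⌋ = if 0 < g' then k else k - 1 := by
  have hc : Tendsto g (𝓝[>] x) (𝓝 (k : ℝ)) := hk ▸ hg.continuousAt.continuousWithinAt
  rcases hg'.lt_or_gt with hneg | hpos
  · have hlt : Tendsto g (𝓝[>] x) (𝓝[<] (k : ℝ)) := tendsto_nhdsWithin_iff.2
      ⟨hc, by simpa [hk] using hg.neg.eventually_nhdsGT_lt (neg_pos.2 hneg)⟩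
    simpa [hneg.not_gt] using tendsto_pure.1 ((tendsto_floor_left_pure_sub_one k).comp hlt)
  · have hge : Tendsto g (𝓝[>] x) (𝓝[≥] (k : ℝ)) := tendsto_nhdsWithin_iff.2
      ⟨hc, by simpa [hk] using (hg.eventually_nhdsGT_lt hpos).mono fun t ht => ht.le⟩
    simpa [hpos] using tendsto_pure.1 ((tendsto_floor_right_pure k).comp hge)

theorem HasDerivAt.eventually_floor_nhdsLT {k : ℤ} (hg : HasDerivAt g g' x) (hg' : g' ≠ 0)
    (hk : g x = k) : ∀ᶠ t in 𝓝[<] x, ⌊g t⌋ = if 0 < g' then k - 1 else k := by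
  have hc : Tendsto g (𝓝[<] x) (𝓝 (k : ℝ)) := hk ▸ hg.continuousAt.continuousWithinAt
  rcases hg'.lt_or_gt with hneg | hpos
  · have hge : Tendsto g (𝓝[<] x) (𝓝[≥] (k : ℝ)) := tendsto_nhdsWithin_iff.2
      ⟨hc, (hg.neg.eventually_nhdsLT_gt (neg_pos.2 hneg)).mono fun t ht => by
        simp only [hk, Pi.neg_apply, neg_lt_neg_iff] at ht; exact ht.le⟩
    simpa [hneg.not_gt] using tendsto_pure.1 ((tendsto_floor_right_pure k).comp hge)
  · have hlt : Tendsto g (𝓝[<] x) (𝓝[<] (k : ℝ)) := tendsto_nhdsWithin_iff.2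
      ⟨hc, by simpa [hk] using hg.eventually_nhdsLT_gt hpos⟩
    simpa [hpos] using tendsto_pure.1 ((tendsto_floor_left_pure_sub_one k).comp hlt)

end

theorem floor_eq_floor_of_forall_ne_intCast {g : ℝ → ℝ} {s t : ℝ} (hst : s ≤ t)
    (hg : ContinuousOn g (Icc s t)) (h : ∀ u ∈ Icc s t, ∀ k : ℤ, g u ≠ k) :
    ⌊g s⌋ = ⌊g t⌋ := by
  by_contra hne
  rcases lt_or_gt_of_ne hne with hlt | hgt
  · obtain ⟨u, hu, hgu⟩ := intermediate_value_Icc hst hg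
      ⟨(Int.floor_lt.1 hlt).le, Int.floor_le (g t)⟩
    exact h u hu _ hgu
  · obtain ⟨u, hu, hgu⟩ := intermediate_value_Icc' hst hg
      ⟨(Int.floor_lt.1 hgt).le, Int.floor_le (g s)⟩
    exact h u hu _ hgu

theorem sum_sign_deriv_eq_floor_sub_floor {g : ℝ → ℝ} {a b : ℝ} (s : Finset ℝ) (hab : a ≤ b)
    (hg : ContinuousOn g (Icc a b)) (hs : ∀ x ∈ Icc a b, x ∈ s ↔ ∃ k : ℤ, g x = k)
    (hsub : ↑s ⊆ Ioo a b) (hreg : ∀ x ∈ s, DifferentiableAt ℝ g x ∧ deriv g x ≠ 0) :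
    ∑ x ∈ s, (if 0 < deriv g x then (1 : ℤ) else -1) = ⌊g b⌋ - ⌊g a⌋ := by
  induction s using Finset.induction_on_max generalizing b with
  | empty =>
    rw [Finset.sum_empty, floor_eq_floor_of_forall_ne_intCast hab hg
      fun u hu k hk => Finset.notMem_empty u ((hs u hu).2 ⟨k, hk⟩), sub_self]
  | insert m s hlt ih =>
    have hms : m ∈ insert m s := Finset.mem_insert_self m s
    have hm : m ∈ Ioo a b := hsub hms
    obtain ⟨k, hk⟩ := (hs m (Ioo_subset_Icc_self hm)).1 hms
    have hdm : HasDerivAt g (deriv g m) m := (hreg m hms).1.hasDerivAt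
    obtain ⟨c, ⟨hac, hcm⟩, hsc, hc⟩ : ∃ c, c ∈ Ioo a m ∧ (∀ x ∈ s, x < c) ∧
        ⌊g c⌋ = if 0 < deriv g m then k - 1 else k := by
      have hbelow : ∀ᶠ c in 𝓝[<] m, ∀ x ∈ s, x < c :=
        s.eventually_all.2 fun x hx => nhdsWithin_le_nhds (eventually_gt_nhds (hlt x hx))
      exact (Eventually.and (Ioo_mem_nhdsLT hm.1) (hbelow.and
        (hdm.eventually_floor_nhdsLT (hreg m hms).2 hk))).exists
    obtain ⟨t, ⟨hmt, htb⟩, ht⟩ := (Eventually.and (Ioo_mem_nhdsGT hm.2)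
      (hdm.eventually_floor_nhdsGT (hreg m hms).2 hk)).exists
    have ihc := ih (b := c) hac.le (hg.mono (Icc_subset_Icc_right (hcm.trans hm.2).le))
      (fun x hx => by
        rw [← hs x ⟨hx.1, hx.2.trans (hcm.trans hm.2).le⟩, Finset.mem_insert]
        exact ⟨Or.inr, fun h => h.resolve_left (hx.2.trans_lt hcm).ne⟩)
      (fun x hx => ⟨(hsub (Finset.mem_insert_of_mem hx)).1, hsc x hx⟩)
      (fun x hx => hreg x (Finset.mem_insert_of_mem hx))
    have htb' : ⌊g t⌋ = ⌊g b⌋ := floor_eq_floor_of_forall_ne_intCast htb.le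
      (hg.mono (Icc_subset_Icc_left (hm.1.trans hmt).le)) fun u hu j hj => by
        have := (hs u ⟨(hm.1.trans hmt).le.trans hu.1, hu.2⟩).2 ⟨j, hj⟩
        rcases Finset.mem_insert.1 this with rfl | hus
        · exact (hmt.trans_le hu.1).false
        · exact ((hlt u hus).trans (hmt.trans_le hu.1)).false
    rw [Finset.sum_insert fun h => (hlt m h).false, ihc, ← htb', ht, hc]
    split_ifs <;> ring

/-- Let `f : ℝ → ℝ` be continuous with `f (x+1) = f x + d` for all
`x`, `d` an integer, and `y : ℝ`. If the fiber `F = {x ∈ [0,1) : f x - y ∈ ℤ}`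
is finite and `f` is differentiable with nonvanishing derivative at each point
of `F`, then the sum over `x ∈ F` of the sign of `deriv f x` equals `d`. -/
theorem signed_count_of_regular_fiber_eq_degree (f : ℝ → ℝ) (d : ℤ)
    (hf : Continuous f) (hper : ∀ x, f (x + 1) = f x + d) (y : ℝ)
    (hF : {x | x ∈ Set.Ico (0 : ℝ) 1 ∧ ∃ k : ℤ, f x - y = k}.Finite)
    (hreg : ∀ x ∈ {x | x ∈ Set.Ico (0 : ℝ) 1 ∧ ∃ k : ℤ, f x - y = k},
      DifferentiableAt ℝ f x ∧ deriv f x ≠ 0) :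
    ∑ x ∈ hF.toFinset, (if 0 < deriv f x then (1 : ℤ) else -1) = d := by
  have hshift : ∀ x, (∃ k : ℤ, f x - y = k) → ∃ k : ℤ, f (x + 1) - y = k :=
    fun x ⟨k, hk⟩ => ⟨k + d, by rw [hper, Int.cast_add, ← hk]; ring⟩
  have hbelow : ∀ᶠ c in 𝓝[<] (0 : ℝ), ∀ x ∈ hF.toFinset, x - 1 < c :=
    hF.toFinset.eventually_all.2 fun x hx => nhdsWithin_le_nhds
      (eventually_gt_nhds (by linarith [(hF.mem_toFinset.1 hx).1.2]))
  obtain ⟨c, ⟨hc₁, hc₀⟩, hcF⟩ :=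
    (Eventually.and (Ioo_mem_nhdsLT (by norm_num : (-1 : ℝ) < 0)) hbelow).exists
  have hfiber : ∀ x ∈ Icc c (c + 1), x ∈ hF.toFinset ↔ ∃ k : ℤ, f x - y = k := by
    intro x hx
    rw [hF.mem_toFinset]
    refine ⟨And.right, fun hx' => ⟨⟨?_, by linarith [hx.2]⟩, hx'⟩⟩
    by_contra hneg
    have := hcF (x + 1) (hF.mem_toFinset.2 ⟨⟨by linarith [hx.1], by linarith⟩, hshift x hx'⟩)
    linarith [hx.1]
  have hsum := sum_sign_deriv_eq_floor_sub_floor (g := (f · - y)) hF.toFinset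
    (by linarith : c ≤ c + 1) (hf.sub continuous_const).continuousOn hfiber
    (fun x hx => ⟨by linarith [(hF.mem_toFinset.1 hx).1.1], by linarith [hcF x hx]⟩)
    (fun x hx => by
      simpa only [deriv_sub_const] using
        (hreg x (hF.mem_toFinset.1 hx)).imp_left (·.sub_const y))
  simpa only [deriv_sub_const, hper, add_sub_right_comm, Int.floor_add_intCast,
    sub_self, zero_add] using hsum
end

section
/- Let f : ℝ → ℝ be continuous with f(x+1) = f(x) + d for all x ∈ ℝ, d an integer, and let y ∈ ℝ. Suppose the fiber F = {x ∈ [0,1) : f(x) − y ∈ ℤ} is finite and that f is differentiable at each point x ∈ F with deriv f x ≠ 0. Then the cardinality of F is congruent to d modulo 2. -/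
/-!
Follow the integer part of `f x - y` across a window `[a, a + 1]` whose endpoint `a` is not in
the fiber: over the window it increases by `d`. Away from the fiber it is locally constant
(intermediate value theorem), and at a fiber point, where `f - y` crosses an integer with nonzero
speed, it jumps by `±1`. So `d` has the parity of the number of fiber points in the window, and
reduction modulo `1` (`toIcoMod`) matches these with the fiber points in `[0, 1)`.
-/

open Filter Set Topology

section Floor

variable {α R : Type*} [Ring R] [LinearOrder R] [FloorRing R] [TopologicalSpace R]
  [OrderClosedTopology R]

theorem IsPreconnected.floor_eq_floor [TopologicalSpace α] {s : Set α} {g : α → R}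
    (hs : IsPreconnected s) (hg : ContinuousOn g s) (hs_int : ∀ x ∈ s, ¬∃ k : ℤ, g x = k)
    {x x' : α} (hx : x ∈ s) (hx' : x' ∈ s) : ⌊g x⌋ = ⌊g x'⌋ := by
  wlog hle : ⌊g x⌋ ≤ ⌊g x'⌋ generalizing x x'
  · exact (this hx' hx (le_of_not_ge hle)).symm
  refine hle.antisymm (not_lt.1 fun hlt => ?_)
  obtain ⟨z, hz, hgz⟩ := hs.intermediate_value hx hx' hg
    ⟨(Int.floor_lt.1 hlt).le, Int.floor_le (g x')⟩
  exact hs_int z hz ⟨_, hgz⟩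

variable [IsStrictOrderedRing R]

theorem Filter.Tendsto.eventually_floor_eq_sub_one {l : Filter α} {g : α → R} {k : ℤ}
    (hg : Tendsto g l (𝓝 k)) (hlt : ∀ᶠ x in l, g x < k) : ∀ᶠ x in l, ⌊g x⌋ = k - 1 :=
  tendsto_pure.1 <| (tendsto_floor_left_pure_sub_one k).comp (tendsto_nhdsWithin_iff.2 ⟨hg, hlt⟩)

theorem Filter.Tendsto.eventually_floor_eq {l : Filter α} {g : α → R} {k : ℤ}
    (hg : Tendsto g l (𝓝 k)) (hle : ∀ᶠ x in l, (k : R) ≤ g x) : ∀ᶠ x in l, ⌊g x⌋ = k :=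
  tendsto_pure.1 <| (tendsto_floor_right_pure k).comp (tendsto_nhdsWithin_iff.2 ⟨hg, hle⟩)

end Floor

theorem Function.Periodic.bijOn_toIcoMod {α : Type*} [AddCommGroup α] [LinearOrder α]
    [IsOrderedAddMonoid α] [Archimedean α] {p : α} (hp : 0 < p) {P : α → Prop}
    (hP : Function.Periodic P p) (a b : α) :
    BijOn (toIcoMod hp b) {x ∈ Ico a (a + p) | P x} {x ∈ Ico b (b + p) | P x} := by
  have hmaps : ∀ a b,
      MapsTo (toIcoMod hp b) {x ∈ Ico a (a + p) | P x} {x ∈ Ico b (b + p) | P x} :=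
    fun a b x hx => ⟨toIcoMod_mem_Ico hp b x,
      by rw [← self_sub_toIcoDiv_zsmul, hP.sub_zsmul_eq]; exact hx.2⟩
  have hinv : ∀ a b, LeftInvOn (toIcoMod hp a) (toIcoMod hp b) {x ∈ Ico a (a + p) | P x} :=
    fun a b x hx => by rw [toIcoMod_toIcoMod, (toIcoMod_eq_self hp).2 hx.1]
  exact InvOn.bijOn ⟨hinv a b, hinv b a⟩ (hmaps a b) (hmaps b a)

theorem HasDerivAt.of_toIcoMod_of_map_add_one {f : ℝ → ℝ} {d f' b x : ℝ}
    (hper : ∀ x, f (x + 1) = f x + d) (hf : HasDerivAt f f' (toIcoMod one_pos b x)) :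
    HasDerivAt f f' x := by
  set n := toIcoDiv one_pos b x
  have hshift : (fun t => f (t - n) + n • d) = f := funext fun t => by
    have : f (t - n) = f t - n • d := AddConstMapClass.map_sub_int' (AddConstMap.mk f hper) t n
    rw [this, sub_add_cancel]
  have hx : x - n = toIcoMod one_pos b x := by simpa using self_sub_toIcoDiv_zsmul one_pos b x
  rw [← hshift]
  exact (HasDerivAt.comp_sub_const x n (hx ▸ hf)).add_const _

section Crossing

variable {g : ℝ → ℝ} {g' x₀ : ℝ}

theorem HasDerivAt.eventually_lt_nhdsLT_and_gt_nhdsGT (hg : HasDerivAt g g' x₀) (hg' : 0 < g') :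
    (∀ᶠ x in 𝓝[<] x₀, g x < g x₀) ∧ ∀ᶠ x in 𝓝[>] x₀, g x₀ < g x := by
  have hslope : ∀ᶠ x in 𝓝[≠] x₀, 0 < slope g x₀ x :=
    (hasDerivAt_iff_tendsto_slope.1 hg).eventually (eventually_gt_nhds hg')
  exact ⟨((hslope.filter_mono (nhdsLT_le_nhdsNE x₀)).and eventually_mem_nhdsWithin).mono
      fun x ⟨hs, hx⟩ => (slope_pos_iff_gt hx).1 hs,
    ((hslope.filter_mono (nhdsGT_le_nhdsNE x₀)).and eventually_mem_nhdsWithin).mono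
      fun x ⟨hs, hx⟩ => (slope_pos_iff hx).1 hs⟩

theorem exists_odd_floor_jump {k : ℤ} (hk : g x₀ = k) (hg : HasDerivAt g g' x₀) (hg' : g' ≠ 0) :
    ∃ i j : ℤ, Odd (j - i) ∧ (∀ᶠ x in 𝓝[<] x₀, ⌊g x⌋ = i) ∧ ∀ᶠ x in 𝓝[>] x₀, ⌊g x⌋ = j := by
  have hlim : Tendsto g (𝓝 x₀) (𝓝 k) := hk ▸ hg.continuousAt.tendsto
  have hl := hlim.mono_left (nhdsWithin_le_nhds (s := Iio x₀))
  have hr := hlim.mono_left (nhdsWithin_le_nhds (s := Ioi x₀))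
  rcases hg'.lt_or_gt with hneg | hpos
  · obtain ⟨hL, hR⟩ := hg.neg.eventually_lt_nhdsLT_and_gt_nhdsGT (neg_pos.2 hneg)
    exact ⟨k, k - 1, ⟨-1, by ring⟩,
      hl.eventually_floor_eq (hL.mono fun x hx => hk ▸ (neg_lt_neg_iff.1 hx).le),
      hr.eventually_floor_eq_sub_one (hR.mono fun x hx => hk ▸ neg_lt_neg_iff.1 hx)⟩
  · obtain ⟨hL, hR⟩ := hg.eventually_lt_nhdsLT_and_gt_nhdsGT hpos
    exact ⟨k - 1, k, ⟨0, by ring⟩, hl.eventually_floor_eq_sub_one (hk ▸ hL),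
      hr.eventually_floor_eq (hR.mono fun x hx => hk ▸ hx.le)⟩

theorem odd_floor_sub_floor_of_unique_crossing {a b : ℝ} (hg : ContinuousOn g (Icc a b))
    (hx₀ : x₀ ∈ Ioo a b) (hk : ∃ k : ℤ, g x₀ = k) (hderiv : HasDerivAt g g' x₀) (hg' : g' ≠ 0)
    (hunique : ∀ x ∈ Icc a b, (∃ k : ℤ, g x = k) → x = x₀) : Odd (⌊g b⌋ - ⌊g a⌋) := by
  obtain ⟨k, hk⟩ := hk
  obtain ⟨i, j, hodd, hi, hj⟩ := exists_odd_floor_jump hk hderiv hg'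
  obtain ⟨x₁, hx₁, hx₁a⟩ := (hi.and (Ioo_mem_nhdsLT hx₀.1)).exists
  obtain ⟨x₂, hx₂, hx₂b⟩ := (hj.and (Ioo_mem_nhdsGT hx₀.2)).exists
  have hconst : ∀ c d, c ≤ d → Icc c d ⊆ Icc a b → x₀ ∉ Icc c d → ⌊g c⌋ = ⌊g d⌋ :=
    fun c d hcd hsub hx₀ => isPreconnected_Icc.floor_eq_floor (hg.mono hsub)
      (fun x hx hint => hx₀ (hunique x (hsub hx) hint ▸ hx)) (left_mem_Icc.2 hcd)
      (right_mem_Icc.2 hcd)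
  rwa [hconst a x₁ hx₁a.1.le (Icc_subset_Icc_right (hx₁a.2.trans hx₀.2).le)
      (fun h => h.2.not_gt hx₁a.2), hx₁,
    ← hconst x₂ b hx₂b.2.le (Icc_subset_Icc_left (hx₀.1.trans hx₂b.1).le)
      (fun h => h.1.not_gt hx₂b.1), hx₂]

theorem floor_sub_floor_modEq_card {a b : ℝ} (s : Finset ℝ) (hab : a ≤ b)
    (hg : ContinuousOn g (Icc a b)) (ha : ¬∃ k : ℤ, g a = k) (hb : ¬∃ k : ℤ, g b = k)
    (hs : {x ∈ Ioo a b | ∃ k : ℤ, g x = k} = ↑s)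
    (hreg : ∀ x ∈ s, ∃ g', HasDerivAt g g' x ∧ g' ≠ 0) :
    ⌊g b⌋ - ⌊g a⌋ ≡ s.card [ZMOD 2] := by
  induction s using Finset.induction_on_max generalizing b with
  | empty =>
    have hno : ∀ x ∈ Icc a b, ¬∃ k : ℤ, g x = k := fun x hx hint => by
      rcases eq_endpoints_or_mem_Ioo_of_mem_Icc hx with rfl | rfl | hx
      exacts [ha hint, hb hint, Finset.notMem_empty x (Set.ext_iff.1 hs x |>.1 ⟨hx, hint⟩)]
    simp [isPreconnected_Icc.floor_eq_floor hg hno (left_mem_Icc.2 hab) (right_mem_Icc.2 hab)]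
  | insert x₀ s hlt ih =>
    have hmem : ∀ x, (x ∈ Ioo a b ∧ ∃ k : ℤ, g x = k) ↔ x = x₀ ∨ x ∈ s :=
      fun x => (Set.ext_iff.1 hs x).trans Finset.mem_insert
    obtain ⟨⟨hax₀, hx₀b⟩, hk₀⟩ := (hmem x₀).2 (.inl rfl)
    -- cut at `c` between the largest crossing `x₀` and the others: induction on `[a, c]`,
    -- a single crossing on `[c, b]`
    obtain ⟨c, hmc, hcx₀⟩ := exists_between <|
      (Finset.max'_lt_iff _ (Finset.insert_nonempty a s)).2 fun x hx =>
        (Finset.mem_insert.1 hx).elim (· ▸ hax₀) (hlt x)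
    have hac : a < c := (Finset.le_max' _ a (Finset.mem_insert_self a s)).trans_lt hmc
    have hsc : ∀ x ∈ s, x < c :=
      fun x hx => (Finset.le_max' _ x (Finset.mem_insert_of_mem hx)).trans_lt hmc
    have hcrossing : ∀ x ∈ Ioo a b, (∃ k : ℤ, g x = k) → x = x₀ ∨ x < c :=
      fun x hx hint => ((hmem x).1 ⟨hx, hint⟩).imp_right (hsc x)
    have hc : ¬∃ k : ℤ, g c = k := fun hint =>
      (hcrossing c ⟨hac, hcx₀.trans hx₀b⟩ hint).elim hcx₀.ne (lt_irrefl c)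
    have hsub : {x ∈ Ioo a c | ∃ k : ℤ, g x = k} = ↑s := by
      ext x
      refine ⟨fun ⟨hx, hint⟩ => ?_, fun hx => ?_⟩
      · exact ((hmem x).1 ⟨⟨hx.1, hx.2.trans (hcx₀.trans hx₀b)⟩, hint⟩).resolve_left
          (hx.2.trans hcx₀).ne
      · obtain ⟨⟨hax, -⟩, hint⟩ := (hmem x).2 (.inr hx)
        exact ⟨⟨hax, hsc x hx⟩, hint⟩
    have hleft := ih hac.le (hg.mono (Icc_subset_Icc_right (hcx₀.trans hx₀b).le)) hc hsub
      fun x hx => hreg x (Finset.mem_insert_of_mem hx)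
    obtain ⟨g', hg', hg'0⟩ := hreg x₀ (Finset.mem_insert_self x₀ s)
    have hright : ⌊g b⌋ - ⌊g c⌋ ≡ 1 [ZMOD 2] := Int.odd_iff.1 <|
      odd_floor_sub_floor_of_unique_crossing (hg.mono (Icc_subset_Icc_left hac.le))
        ⟨hcx₀, hx₀b⟩ hk₀ hg' hg'0 fun x hx hint => by
          rcases eq_or_lt_of_le hx.2 with rfl | hxb
          · exact absurd hint hb
          · exact (hcrossing x ⟨hac.trans_le hx.1, hxb⟩ hint).resolve_right hx.1.not_gt
    rw [Finset.card_insert_of_notMem fun h => lt_irrefl x₀ (hlt x₀ h), Nat.cast_succ]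
    simpa using hleft.add hright

end Crossing

theorem Set.sep_Ioo_eq_sep_Ico {α : Type*} [PartialOrder α] {a b : α} {P : α → Prop}
    (ha : ¬P a) : {x ∈ Ioo a b | P x} = {x ∈ Ico a b | P x} := by
  ext x
  exact ⟨fun ⟨hx, hP⟩ => ⟨Ioo_subset_Ico_self hx, hP⟩,
    fun ⟨hx, hP⟩ => ⟨⟨hx.1.lt_of_ne fun hax => ha (hax ▸ hP), hx.2⟩, hP⟩⟩

theorem Function.periodic_exists_int_eq_sub {f : ℝ → ℝ} {d : ℤ}
    (hper : ∀ x, f (x + 1) = f x + d) (y : ℝ) :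
    Function.Periodic (fun x => ∃ k : ℤ, f x - y = k) 1 := fun x => propext <| by
  simp only [hper, add_sub_right_comm]
  exact ⟨fun ⟨k, hk⟩ => ⟨k - d, by push_cast; linarith⟩,
    fun ⟨k, hk⟩ => ⟨k + d, by push_cast; linarith⟩⟩

/-- Let `f : ℝ → ℝ` be continuous with `f (x+1) = f x + d` for all
`x`, `d` an integer, and `y : ℝ`. If the fiber `F = {x ∈ [0,1) : f x - y ∈ ℤ}`
is finite and `f` is differentiable with nonvanishing derivative at each point
of `F`, then the cardinality of `F` is congruent to `d` modulo `2`. -/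
theorem card_regular_fiber_parity (f : ℝ → ℝ) (d : ℤ)
    (hf : Continuous f) (hper : ∀ x, f (x + 1) = f x + d) (y : ℝ)
    (hF : {x | x ∈ Set.Ico (0 : ℝ) 1 ∧ ∃ k : ℤ, f x - y = k}.Finite)
    (hreg : ∀ x ∈ {x | x ∈ Set.Ico (0 : ℝ) 1 ∧ ∃ k : ℤ, f x - y = k},
      DifferentiableAt ℝ f x ∧ deriv f x ≠ 0) :
    (hF.toFinset.card : ℤ) % 2 = d % 2 := by
  have hP := Function.periodic_exists_int_eq_sub hper y
  obtain ⟨a, ha01, haF⟩ := ((Ico_infinite (zero_lt_one' ℝ)).sdiff hF).nonempty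
  have ha : ¬∃ k : ℤ, f a - y = k := fun h => haF ⟨ha01, h⟩
  have hbij : BijOn (toIcoMod one_pos 0) {x ∈ Ico a (a + 1) | ∃ k : ℤ, f x - y = k}
      {x ∈ Ico 0 1 | ∃ k : ℤ, f x - y = k} := by
    simpa only [zero_add] using hP.bijOn_toIcoMod one_pos a 0
  have hwindow : {x ∈ Ioo a (a + 1) | ∃ k : ℤ, f x - y = k} =
      {x ∈ Ico a (a + 1) | ∃ k : ℤ, f x - y = k} := sep_Ioo_eq_sep_Ico ha
  have hfin : {x ∈ Ioo a (a + 1) | ∃ k : ℤ, f x - y = k}.Finite :=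
    hwindow ▸ hF.of_injOn hbij.mapsTo hbij.injOn
  have hcard : hfin.toFinset.card = hF.toFinset.card := by
    rw [← ncard_eq_toFinset_card _ hfin, ← ncard_eq_toFinset_card _ hF, hwindow, hbij.ncard_eq]
  have htransversal :
      ∀ x ∈ hfin.toFinset, ∃ g', HasDerivAt (fun x => f x - y) g' x ∧ g' ≠ 0 := by
    intro x hx
    rw [hfin.mem_toFinset, hwindow] at hx
    obtain ⟨hd, h0⟩ := hreg _ (hbij.mapsTo hx)
    exact ⟨_, (hd.hasDerivAt.of_toIcoMod_of_map_add_one hper).sub_const y, h0⟩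
  have hfloor : ⌊f (a + 1) - y⌋ - ⌊f a - y⌋ = d := by
    rw [hper, add_sub_right_comm, Int.floor_add_intCast, add_sub_cancel_left]
  have key := floor_sub_floor_modEq_card (g := fun x => f x - y) hfin.toFinset (by linarith)
    (hf.sub continuous_const).continuousOn ha ((hP a).to_iff.not.2 ha) hfin.coe_toFinset.symm
    htransversal
  rw [hfloor, hcard] at key
  exact key.symm
end

section
/- Let f : ℝ → ℝ be continuous with f(x+1) = f(x) + d for all x ∈ ℝ, d an integer, and let y ∈ ℝ. Suppose the fiber F = {x ∈ [0,1) : f(x) − y ∈ ℤ} is finite and that f is differentiable at each point x ∈ F with deriv f x ≠ 0. Then the cardinality of F is at least |d| (the absolute value of d). -/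
/-!
Since `f 1 - f 0 = d`, the half-open range between `f 0` and `f 1` contains `|d|` consecutive
levels `y + k` with `k ∈ ℤ`. By the intermediate value theorem on `[0, 1)` each of them is a
value of `f` at some point of the fiber, and distinct levels give distinct points.
-/

open Set

variable {f : ℝ → ℝ} {a b y : ℝ} {n : ℕ}

theorem natCast_le_ncard_intFiber_of_add_le (hab : a ≤ b) (hf : ContinuousOn f (Icc a b))
    (hn : f a + n ≤ f b) (hF : {x | x ∈ Ico a b ∧ ∃ k : ℤ, f x - y = k}.Finite) :
    n ≤ {x | x ∈ Ico a b ∧ ∃ k : ℤ, f x - y = k}.ncard := by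
  rw [ncard_eq_toFinset_card _ hF]
  set m := ⌈f a - y⌉
  have hsurj : SurjOn (fun x => ⌊f x - y⌋) hF.toFinset (Finset.Ico m (m + n)) := by
    intro k hk
    rw [Finset.coe_Ico, mem_Ico] at hk
    have hkm : (m : ℝ) ≤ k := by exact_mod_cast hk.1
    have hkn : (k : ℝ) + 1 ≤ m + n := by exact_mod_cast hk.2
    have hval : y + k ∈ Ico (f a) (f b) :=
      ⟨by linarith [Int.le_ceil (f a - y)], by linarith [Int.ceil_lt_add_one (f a - y)]⟩
    obtain ⟨x, hx, hfx⟩ := intermediate_value_Ico hab hf hval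
    refine ⟨x, ?_, ?_⟩
    · simpa [hfx] using hx
    · simp [hfx]
  simpa using Finset.card_le_card_of_surjOn _ hsurj

theorem natCast_le_ncard_intFiber (hab : a ≤ b) (hf : ContinuousOn f (Icc a b))
    (hn : n ≤ |f b - f a|) (hF : {x | x ∈ Ico a b ∧ ∃ k : ℤ, f x - y = k}.Finite) :
    n ≤ {x | x ∈ Ico a b ∧ ∃ k : ℤ, f x - y = k}.ncard := by
  rcases le_total (f a) (f b) with h | h
  · rw [abs_of_nonneg (sub_nonneg.2 h)] at hn
    exact natCast_le_ncard_intFiber_of_add_le hab hf (by linarith) hF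
  · rw [abs_of_nonpos (sub_nonpos.2 h)] at hn
    have hneg : {x | x ∈ Ico a b ∧ ∃ k : ℤ, -f x - -y = k} =
        {x | x ∈ Ico a b ∧ ∃ k : ℤ, f x - y = k} := by
      ext x
      refine and_congr_right fun _ => ⟨fun ⟨k, hk⟩ => ⟨-k, ?_⟩, fun ⟨k, hk⟩ => ⟨-k, ?_⟩⟩ <;>
        push_cast <;> linarith
    rw [← hneg] at hF ⊢
    exact natCast_le_ncard_intFiber_of_add_le (f := (-f ·)) hab hf.neg (by linarith) hF

theorem card_regular_fiber_ge_natAbs_degree_general (f : ℝ → ℝ) (d : ℤ)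
    (hf : Continuous f) (hper : ∀ x, f (x + 1) = f x + d) (y : ℝ)
    (hF : {x | x ∈ Set.Ico (0 : ℝ) 1 ∧ ∃ k : ℤ, f x - y = k}.Finite) :
    d.natAbs ≤ hF.toFinset.card := by
  have hdeg : f 1 - f 0 = d := by linarith [zero_add (1 : ℝ) ▸ hper 0]
  rw [← ncard_eq_toFinset_card _ hF]
  refine natCast_le_ncard_intFiber zero_le_one hf.continuousOn ?_ hF
  rw [hdeg, Nat.cast_natAbs, Int.cast_abs]

/-- Let `f : ℝ → ℝ` be continuous with `f (x+1) = f x + d` for all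
`x`, `d` an integer, and `y : ℝ`. If the fiber `F = {x ∈ [0,1) : f x - y ∈ ℤ}`
is finite and `f` is differentiable with nonvanishing derivative at each point
of `F`, then the cardinality of `F` is at least `|d|`. -/
theorem card_regular_fiber_ge_natAbs_degree (f : ℝ → ℝ) (d : ℤ)
    (hf : Continuous f) (hper : ∀ x, f (x + 1) = f x + d) (y : ℝ)
    (hF : {x | x ∈ Set.Ico (0 : ℝ) 1 ∧ ∃ k : ℤ, f x - y = k}.Finite)
    (hreg : ∀ x ∈ {x | x ∈ Set.Ico (0 : ℝ) 1 ∧ ∃ k : ℤ, f x - y = k},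
      DifferentiableAt ℝ f x ∧ deriv f x ≠ 0) :
    d.natAbs ≤ hF.toFinset.card :=
  card_regular_fiber_ge_natAbs_degree_general f d hf hper y hF
end

section
/- Let f : ℝ → ℝ be differentiable with deriv f x ≠ 0 for every x ∈ ℝ, and suppose f(x+1) = f(x) + d for all x ∈ ℝ, where d is an integer. Then for every y ∈ ℝ, the fiber {x ∈ [0,1) : f(x) − y ∈ ℤ} is finite and has exactly |d| elements. -/
open Set

lemma key_mono (g : ℝ → ℝ) (hc : Continuous g) (hm : StrictMono g)
    (e : ℤ) (hper : ∀ x, g (x + 1) = g x + e) (y : ℝ) :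
    {x | x ∈ Set.Ico (0 : ℝ) 1 ∧ ∃ k : ℤ, g x - y = k}.Finite ∧
    Nat.card {x | x ∈ Set.Ico (0 : ℝ) 1 ∧ ∃ k : ℤ, g x - y = k} = e.natAbs := by
  have hg1 : g 1 = g 0 + e := by simpa using hper 0
  have he : 0 < e := by
    have : g 0 < g 1 := hm (by norm_num)
    rw [hg1] at this
    have : (0:ℝ) < (e:ℝ) := by linarith
    exact_mod_cast this
  set S := {x | x ∈ Set.Ico (0 : ℝ) 1 ∧ ∃ k : ℤ, g x - y = k} with hS
  set m : ℤ := ⌈g 0 - y⌉ with hm'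
  -- the bijection S → Fin e.natAbs
  have hk_range : ∀ x ∈ S, ∀ k : ℤ, g x - y = k → m ≤ k ∧ k < m + e := by
    intro x hx k hk
    obtain ⟨⟨hx0, hx1⟩, _⟩ := hx
    have h1 : g 0 ≤ g x := hm.le_iff_le.2 hx0
    have h2 : g x < g 1 := hm hx1
    rw [hg1] at h2
    constructor
    · have : (g 0 - y : ℝ) ≤ k := by rw [← hk]; linarith
      exact Int.ceil_le.2 this
    · have hc1 : (k : ℝ) < g 0 - y + e := by rw [← hk]; linarith
      have hm1 : (g 0 - y : ℝ) ≤ m := Int.le_ceil _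
      have h3 : (k : ℝ) < ((m + e : ℤ) : ℝ) := by push_cast; linarith
      exact_mod_cast h3
  have hinj : Set.InjOn (fun x => g x) S := fun a _ b _ hab => hm.injective hab
  -- surjectivity: each integer in [m, m+e) is attained
  have hsurj : ∀ j : ℤ, m ≤ j → j < m + e → ∃ x ∈ S, g x - y = j := by
    intro j hj1 hj2
    have ht1 : g 0 ≤ y + j := by
      have : (g 0 - y : ℝ) ≤ m := Int.le_ceil _
      have : (m : ℝ) ≤ j := by exact_mod_cast hj1
      linarith [Int.le_ceil (g 0 - y)]
    have ht2 : y + j < g 1 := by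
      rw [hg1]
      have : (j : ℝ) < m + e := by exact_mod_cast hj2
      have : (m : ℝ) < g 0 - y + 1 := Int.ceil_lt_add_one _
      have hje : (j : ℝ) ≤ m + e - 1 := by
        have : j ≤ m + e - 1 := by omega
        exact_mod_cast this
      linarith
    have := intermediate_value_Ico (by norm_num : (0:ℝ) ≤ 1) hc.continuousOn
    obtain ⟨x, hx, hgx⟩ := this ⟨ht1, ht2⟩
    exact ⟨x, ⟨hx, ⟨j, by rw [hgx]; ring⟩⟩, by rw [hgx]; ring⟩
  -- define the equiv with Fin e.natAbs
  classical
  have hkey : ∀ x : S, ∃ k : ℤ, g x.1 - y = k := fun x => x.2.2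
  choose kf hkf using hkey
  have hφ : ∀ x : S, (kf x - m).toNat < e.natAbs := by
    intro x
    have := hk_range x.1 x.2 (kf x) (hkf x)
    omega
  let φ : S → Fin e.natAbs := fun x => ⟨(kf x - m).toNat, hφ x⟩
  have hbij : Function.Bijective φ := by
    constructor
    · intro a b hab
      have h1 : kf a = kf b := by
        have ha := hk_range a.1 a.2 (kf a) (hkf a)
        have hb := hk_range b.1 b.2 (kf b) (hkf b)
        have : (kf a - m).toNat = (kf b - m).toNat := congrArg Fin.val hab
        omega
      have : g a.1 = g b.1 := by
        have := hkf a
        have := hkf b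
        rw [h1] at *
        linarith
      exact Subtype.ext (hm.injective this)
    · intro j
      obtain ⟨x, hx, hgx⟩ := hsurj (m + j) (by omega)
        (by have := j.2; simp only [Int.lt_iff_add_one_le]; omega)
      refine ⟨⟨x, hx⟩, ?_⟩
      have hk : kf ⟨x, hx⟩ = m + j := by
        have := hkf ⟨x, hx⟩
        have : (kf ⟨x, hx⟩ : ℝ) = ((m + j : ℤ) : ℝ) := by
          push_cast at this hgx ⊢
          linarith
        exact_mod_cast this
      simp [φ, hk]
  have hfin : S.Finite := by
    have : Finite S := Finite.of_injective φ hbij.1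
    exact Set.toFinite S
  refine ⟨hfin, ?_⟩
  rw [Nat.card_eq_of_bijective φ hbij]
  simp

/-- If `f : ℝ → ℝ` is differentiable with nowhere-vanishing
derivative and `f (x+1) = f x + d` for all `x`, `d` an integer, then for every
`y : ℝ` the fiber `{x ∈ [0,1) : f x - y ∈ ℤ}` is finite with exactly `|d|`
elements. -/
theorem fiber_card_eq_natAbs_of_nonvanishing_deriv (f : ℝ → ℝ)
    (hf : Differentiable ℝ f) (hderiv : ∀ x : ℝ, deriv f x ≠ 0)
    (d : ℤ) (hper : ∀ x, f (x + 1) = f x + d) (y : ℝ) :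
    {x | x ∈ Set.Ico (0 : ℝ) 1 ∧ ∃ k : ℤ, f x - y = k}.Finite ∧
    Nat.card {x | x ∈ Set.Ico (0 : ℝ) 1 ∧ ∃ k : ℤ, f x - y = k} = d.natAbs := by
  have hcont : Continuous f := hf.continuous
  have hinj : Function.Injective f := by
    intro a b hab
    by_contra hne
    rcases lt_or_gt_of_ne hne with h | h
    case _ =>
      obtain ⟨c, _, hc⟩ := exists_deriv_eq_zero h hcont.continuousOn hab
      exact hderiv c hc
    case _ =>
      obtain ⟨c, _, hc⟩ := exists_deriv_eq_zero h hcont.continuousOn hab.symm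
      exact hderiv c hc
  rcases hcont.strictMono_of_inj hinj with hmono | hanti
  · exact key_mono f hcont hmono d hper y
  · have hm : StrictMono (fun x => -f x) := fun a b hab => by
      simpa using neg_lt_neg (hanti hab)
    have hper' : ∀ x, -f (x + 1) = -f x + ((-d : ℤ) : ℝ) := by
      intro x; rw [hper x]; push_cast; ring
    have := key_mono (fun x => -f x) (hcont.neg) hm (-d) hper' (-y)
    have hset : {x | x ∈ Set.Ico (0 : ℝ) 1 ∧ ∃ k : ℤ, -f x - -y = k}
        = {x | x ∈ Set.Ico (0 : ℝ) 1 ∧ ∃ k : ℤ, f x - y = k} := by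
      ext x
      simp only [Set.mem_setOf_eq, and_congr_right_iff]
      intro _
      constructor
      · rintro ⟨k, hk⟩; exact ⟨-k, by push_cast; linarith⟩
      · rintro ⟨k, hk⟩; exact ⟨-k, by push_cast; linarith⟩
    rw [hset] at this
    simpa using this
end

section
/- Let f : ℝ → ℝ be differentiable and satisfy f(x+1) = f(x) + d for all x ∈ ℝ, where d is an integer. If there exists y ∈ ℝ such that the fiber {x ∈ [0,1) : f(x) − y ∈ ℤ} is infinite or has cardinality different from |d|, then there exists x ∈ ℝ with deriv f x = 0. -/
/-!
If `f'` never vanishes, Rolle's theorem makes `f` injective, hence (being continuous) strictly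
monotone or strictly antitone. Then `x ↦ f x - y` maps `[0, 1)` bijectively onto a half-open
interval of integer length `|d|`, which contains exactly `|d|` integers; so every fiber has
exactly `|d|` points.
-/

open Set Function

theorem injective_of_deriv_ne_zero {f : ℝ → ℝ} (hf : Differentiable ℝ f)
    (h : ∀ x, deriv f x ≠ 0) : Injective f :=
  Injective.of_lt_imp_ne fun _ _ hab hfab =>
    let ⟨c, _, hc⟩ := exists_deriv_eq_zero hab hf.continuous.continuousOn hfab
    h c hc

section IntermediateValue

variable {α δ : Type*} [ConditionallyCompleteLinearOrder α] [TopologicalSpace α]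
  [OrderTopology α] [DenselyOrdered α] [LinearOrder δ] [TopologicalSpace δ]
  [OrderClosedTopology δ] {a b : α} {g : α → δ}

theorem ContinuousOn.encard_Ico_inter_preimage_of_strictMonoOn (hab : a ≤ b)
    (hc : ContinuousOn g (Icc a b)) (hg : StrictMonoOn g (Icc a b)) (t : Set δ) :
    (Ico a b ∩ g ⁻¹' t).encard = (Ico (g a) (g b) ∩ t).encard := by
  rw [← ((hg.injOn.mono Ico_subset_Icc_self).mono inter_subset_left).encard_image,
    image_inter_preimage, hc.image_Ico_of_strictMonoOn hab hg]

theorem ContinuousOn.encard_Ico_inter_preimage_of_strictAntiOn (hab : a ≤ b)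
    (hc : ContinuousOn g (Icc a b)) (hg : StrictAntiOn g (Icc a b)) (t : Set δ) :
    (Ico a b ∩ g ⁻¹' t).encard = (Ioc (g b) (g a) ∩ t).encard := by
  rw [← ((hg.injOn.mono Ico_subset_Icc_self).mono inter_subset_left).encard_image,
    image_inter_preimage, hc.image_Ico_of_strictAntiOn hab hg]

end IntermediateValue

section FloorRing

variable {R : Type*} [Ring R] [LinearOrder R] [FloorRing R]

theorem encard_Ico_inter_range_intCast (a b : R) :
    (Ico a b ∩ range ((↑) : ℤ → R)).encard = (⌈b⌉ - ⌈a⌉).toNat := by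
  rw [← image_preimage_eq_inter_range, Int.cast_injective.encard_image, Int.preimage_Ico,
    ← Finset.coe_Ico, encard_coe_eq_coe_finsetCard, Int.card_Ico]

theorem encard_Ioc_inter_range_intCast (a b : R) :
    (Ioc a b ∩ range ((↑) : ℤ → R)).encard = (⌊b⌋ - ⌊a⌋).toNat := by
  rw [← image_preimage_eq_inter_range, Int.cast_injective.encard_image, Int.preimage_Ioc,
    ← Finset.coe_Ioc, encard_coe_eq_coe_finsetCard, Int.card_Ioc]

end FloorRing

theorem encard_Ico_inter_preimage_range_intCast {g : ℝ → ℝ} (hc : Continuous g)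
    (hinj : Injective g) {d : ℤ} (hd : g 1 = g 0 + d) :
    (Ico 0 1 ∩ g ⁻¹' range ((↑) : ℤ → ℝ)).encard = d.natAbs := by
  rcases hc.strictMono_of_inj hinj with hmono | hanti
  · have hd_pos : (0 : ℝ) < d := by linarith [hmono zero_lt_one]
    rw [hc.continuousOn.encard_Ico_inter_preimage_of_strictMonoOn zero_le_one
      (hmono.strictMonoOn _), encard_Ico_inter_range_intCast, hd, Int.ceil_add_intCast,
      add_sub_cancel_left]
    have : 0 < d := by exact_mod_cast hd_pos
    congr 1
    omega
  · have hd_neg : (d : ℝ) < 0 := by linarith [hanti zero_lt_one]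
    rw [hc.continuousOn.encard_Ico_inter_preimage_of_strictAntiOn zero_le_one
      (hanti.strictAntiOn _), encard_Ioc_inter_range_intCast, hd, Int.floor_add_intCast,
      sub_add_cancel_left]
    have : d < 0 := by exact_mod_cast hd_neg
    congr 1
    omega

/-- Let `f : ℝ → ℝ` be differentiable with `f (x+1) = f x + d` for
all `x`, `d` an integer. If for some `y : ℝ` the fiber
`{x ∈ [0,1) : f x - y ∈ ℤ}` is infinite or has cardinality different from `|d|`,
then the derivative of `f` vanishes somewhere. -/
theorem exists_deriv_zero_of_bad_fiber (f : ℝ → ℝ)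
    (hf : Differentiable ℝ f) (d : ℤ) (hper : ∀ x, f (x + 1) = f x + d)
    (h : ∃ y : ℝ,
      ¬ {x | x ∈ Set.Ico (0 : ℝ) 1 ∧ ∃ k : ℤ, f x - y = k}.Finite ∨
      Nat.card {x | x ∈ Set.Ico (0 : ℝ) 1 ∧ ∃ k : ℤ, f x - y = k} ≠ d.natAbs) :
    ∃ x : ℝ, deriv f x = 0 := by
  obtain ⟨y, hy⟩ := h
  by_contra! hderiv
  have hfiber : {x | x ∈ Ico (0 : ℝ) 1 ∧ ∃ k : ℤ, f x - y = k} =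
      Ico 0 1 ∩ (fun x => f x - y) ⁻¹' range ((↑) : ℤ → ℝ) := by
    ext x
    simp only [mem_ofPred_eq, mem_inter_iff, mem_preimage, mem_range, eq_comm]
  have hcard : {x | x ∈ Ico (0 : ℝ) 1 ∧ ∃ k : ℤ, f x - y = k}.encard = d.natAbs := by
    rw [hfiber]
    refine encard_Ico_inter_preimage_range_intCast (hf.continuous.sub continuous_const)
      (sub_left_injective.comp (injective_of_deriv_ne_zero hf hderiv)) ?_
    show f 1 - y = f 0 - y + d
    rw [← zero_add (1 : ℝ), hper 0]
    ring
  rcases hy with hinfinite | hne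
  · exact hinfinite (finite_of_encard_eq_coe hcard)
  · exact hne (by rw [Nat.card_coe_set_eq, ncard_def, hcard, ENat.toNat_natCast])
end

section
/- Let a ≤ b be real numbers and let f : ℝ → ℝ be continuous and strictly monotone increasing on the interval [a,b]. Then for every y ∈ ℝ, the set {x ∈ [a,b) : f(x) − y ∈ ℤ} is finite and its cardinality equals the cardinality of the set {k : ℤ | y + k ∈ [f(a), f(b))}. -/
/-- If `a ≤ b` and `f : ℝ → ℝ` is continuous and strictly monotone
increasing on `[a,b]`, then for every `y : ℝ` the set
`{x ∈ [a,b) : f x - y ∈ ℤ}` is finite, and its cardinality equals the number of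
integers `k` with `y + k ∈ [f a, f b)`. -/
theorem monotone_arc_covering_depth (a b : ℝ) (hab : a ≤ b) (f : ℝ → ℝ)
    (hf : ContinuousOn f (Set.Icc a b)) (hmono : StrictMonoOn f (Set.Icc a b)) (y : ℝ) :
    {x | x ∈ Set.Ico a b ∧ ∃ k : ℤ, f x - y = k}.Finite ∧
    Nat.card {x | x ∈ Set.Ico a b ∧ ∃ k : ℤ, f x - y = k} =
      Nat.card {k : ℤ | y + (k : ℝ) ∈ Set.Ico (f a) (f b)} := by
  set S := {x | x ∈ Set.Ico a b ∧ ∃ k : ℤ, f x - y = k} with hSdef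
  set T := {k : ℤ | y + (k : ℝ) ∈ Set.Ico (f a) (f b)} with hTdef
  have hmem : ∀ x ∈ Set.Ico a b, x ∈ Set.Icc a b := fun x hx => ⟨hx.1, hx.2.le⟩
  have haI : a ∈ Set.Icc a b := Set.left_mem_Icc.2 hab
  have hbI : b ∈ Set.Icc a b := Set.right_mem_Icc.2 hab
  have hbij : Set.BijOn (fun x => ⌊f x - y⌋) S T := by
    refine ⟨?_, ?_, ?_⟩
    · rintro x ⟨hx, k, hk⟩
      have h1 : f a ≤ f x := hmono.monotoneOn haI (hmem x hx) hx.1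
      have h2 : f x < f b := hmono (hmem x hx) hbI hx.2
      have hfl : ⌊f x - y⌋ = k := by rw [hk]; exact Int.floor_intCast k
      simp only [hTdef, Set.mem_setOf_eq, Set.mem_Ico, hfl]
      constructor <;> [linarith [hk]; linarith [hk]]
    · rintro x1 ⟨hx1, k1, hk1⟩ x2 ⟨hx2, k2, hk2⟩ heq
      simp only at heq
      rw [hk1, hk2, Int.floor_intCast, Int.floor_intCast] at heq
      have heq' : (k1 : ℝ) = k2 := by exact_mod_cast heq
      have : f x1 = f x2 := by linarith [hk1, hk2]
      exact hmono.injOn (hmem x1 hx1) (hmem x2 hx2) this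
    · rintro k hk
      simp only [hTdef, Set.mem_setOf_eq, Set.mem_Ico] at hk
      have hkI : y + (k : ℝ) ∈ Set.Icc (f a) (f b) := ⟨hk.1, hk.2.le⟩
      obtain ⟨x, hxI, hfx⟩ := intermediate_value_Icc hab hf hkI
      have hxb : x < b := by
        rcases lt_or_eq_of_le hxI.2 with h | h
        · exact h
        · exfalso; rw [h] at hfx; linarith [hk.2]
      refine ⟨x, ⟨⟨hxI.1, hxb⟩, k, by rw [hfx]; ring⟩, ?_⟩
      simp only
      rw [show f x - y = (k : ℝ) by rw [hfx]; ring, Int.floor_intCast]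
  have hTfin : T.Finite := by
    apply (Set.finite_Icc ⌈f a - y⌉ ⌊f b - y⌋).subset
    rintro k hk
    simp only [hTdef, Set.mem_setOf_eq, Set.mem_Ico] at hk
    refine Set.mem_Icc.2 ⟨Int.ceil_le.2 (by linarith [hk.1]), Int.le_floor.2 (by linarith [hk.2])⟩
  have hSfin : S.Finite := by
    apply Set.Finite.of_finite_image _ hbij.injOn
    rw [hbij.image_eq]; exact hTfin
  refine ⟨hSfin, ?_⟩
  rw [Nat.card_coe_set_eq, Nat.card_coe_set_eq]
  rw [← hbij.image_eq, Set.ncard_image_of_injOn hbij.injOn]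
end
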